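/- Let A ∈ ℝ^{n×n} be symmetric positive semidefinite, b ∈ ℝ^n with Ax = b consistent, and x* any solution. Fix S ⊆ [n] and let A° := A − A⟨S⟩ with A⟨S⟩ := A_{:,S} (A_{S,S})† A_{S,:}, and assume tr(A°) > 0. Let {x^k}_{k≥0} be the SC-RCD iterates with pivot set S, where each block J = {j_1, …, j_ℓ} consists of ℓ coordinates sampled independently with probabilities A°_{j,j} / tr(A°). Then E||x^k − x*||_A² ≤ (1 − λmin⁺(A°)/tr(A°))^{kℓ} · ||x^0 − x*||_A². -/

import Mathlib

open Matrix

/-- `Mp` is the Moore–Penrose pseudoinverse of `M` (the four Penrose conditions,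
which characterize it uniquely). -/
def IsMoorePenrose {k l : Type*} [Fintype k] [Fintype l]
    (M : Matrix k l ℝ) (Mp : Matrix l k ℝ) : Prop :=
  M * Mp * M = M ∧ Mp * M * Mp = Mp ∧ (M * Mp)ᵀ = M * Mp ∧ (Mp * M)ᵀ = Mp * M

/-- The smallest nonzero eigenvalue of a square real matrix
(with junk value `sInf ∅ = 0` if every eigenvalue is zero). -/
noncomputable def lamMinPos {n : ℕ} (M : Matrix (Fin n) (Fin n) ℝ) : ℝ :=
  sInf {μ : ℝ | μ ≠ 0 ∧ ∃ v : Fin n → ℝ, v ≠ 0 ∧ M *ᵥ v = μ • v}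

/-- The trajectory of an iterative method: `traj step x0 k ω` is the `k`-th iterate
obtained from `x0` using the random draws `ω 0, …, ω (k-1)`. -/
def traj {V I : Type*} (step : I → V → V) (x0 : V) : (k : ℕ) → (Fin k → I) → V
  | 0, _ => x0
  | k + 1, ω => step (ω (Fin.last k)) (traj step x0 k (Fin.init ω))

/-!
Let `P = I − e_S (A_{S,S})† A_{S,:}`. Then `A P = A°` and `Pᵀ A P = A°`, and `P` fixes every
error `e = x − x*` with `A_{S,:} e = 0`, a property every iterate keeps. Hence one SC-RCD step
replaces `e` by `P (e − e_J α)`, whose `A`-energy is the `A°`-energy of an exact block coordinate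
descent step for `A°`. That block step is no worse than `ℓ` successive exact coordinate steps along
`j_1, …, j_ℓ`, and one coordinate step with `j` drawn with probability `A°_{jj} / tr A°` lowers the
`A°`-energy in expectation by the factor `1 − λmin⁺(A°) / tr A°`, because
`‖A° e‖² ≥ λmin⁺(A°) eᵀ A° e`.
-/

namespace Matrix

theorem mul_submatrix_one_id {m N t R : Type*} [Fintype N] [DecidableEq N] [NonAssocSemiring R]
    (M : Matrix m N R) (g : t → N) : M * (1 : Matrix N N R).submatrix id g = M.submatrix id g := by
  simpa using (submatrix_mul M 1 id id g Function.bijective_id).symm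

theorem submatrix_one_id_mul {n N t R : Type*} [Fintype N] [DecidableEq N] [NonAssocSemiring R]
    (f : t → N) (M : Matrix N n R) : (1 : Matrix N N R).submatrix f id * M = M.submatrix f id := by
  simpa using (submatrix_mul 1 M f id id Function.bijective_id).symm

theorem submatrix_id_mulVec {m N t R : Type*} [Fintype N] [NonUnitalNonAssocSemiring R]
    (M : Matrix m N R) (f : t → m) (v : N → R) : M.submatrix f id *ᵥ v = (M *ᵥ v) ∘ f :=
  rfl

theorem of_ite_eq_submatrix_one {N t R : Type*} [DecidableEq N] [Zero R] [One R] (g : t → N) :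
    (of fun i j => if i = g j then (1 : R) else 0) = (1 : Matrix N N R).submatrix id g := by
  ext i j
  simp [one_apply]

theorem submatrix_one_snoc_mulVec_snoc {N : Type*} [DecidableEq N] {m : ℕ} (K : Fin m → N)
    (j : N) (γ : Fin m → ℝ) (c : ℝ) :
    (1 : Matrix N N ℝ).submatrix id (Fin.snoc K j : Fin (m + 1) → N) *ᵥ Fin.snoc γ c =
      (1 : Matrix N N ℝ).submatrix id K *ᵥ γ + c • Pi.single j 1 := by
  ext i
  simp [mulVec, dotProduct, Fin.sum_univ_castSucc, one_apply, Pi.single_apply, eq_comm]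

theorem submatrix_transpose_mul_self {a b s t R : Type*} [Fintype a] [Mul R] [AddCommMonoid R]
    (B : Matrix a b R) (f : s → b) (g : t → b) :
    (Bᵀ * B).submatrix f g = (B.submatrix id f)ᵀ * B.submatrix id g := by
  rw [submatrix_mul _ _ f id g Function.bijective_id, transpose_submatrix]

theorem mul_eq_self_of_transpose_mul_self_mul {a b : Type*} [Fintype a] [Fintype b]
    (X : Matrix a b ℝ) {P : Matrix b b ℝ} (hP : Pᵀ = P) (h : Xᵀ * X * P = Xᵀ * X) :
    X * P = X := by
  have hXt : Xᵀ * (X - X * P) = 0 := by rw [Matrix.mul_sub, ← Matrix.mul_assoc, h, sub_self]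
  have hgram : (X - X * P)ᵀ * (X - X * P) = 0 := by
    rw [transpose_sub, transpose_mul, hP, Matrix.sub_mul, Matrix.mul_assoc, hXt,
      Matrix.mul_zero, sub_zero]
  rw [← conjTranspose_eq_transpose_of_trivial, conjTranspose_mul_self_eq_zero] at hgram
  exact (sub_eq_zero.mp hgram).symm

open scoped MatrixOrder in
theorem PosSemidef.submatrix_mul_pinv_mul {n s t : Type*} [Fintype n] [DecidableEq n]
    [Fintype s] {M : Matrix n n ℝ} (hM : M.PosSemidef) {f : s → n} {W : Matrix s s ℝ}
    (hW : IsMoorePenrose (M.submatrix f f) W) (g : t → n) :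
    M.submatrix f f * W * M.submatrix f g = M.submatrix f g := by
  obtain ⟨B, rfl⟩ := CStarAlgebra.nonneg_iff_eq_star_mul_self.mp hM.nonneg
  rw [star_eq_conjTranspose, conjTranspose_eq_transpose_of_trivial,
    submatrix_transpose_mul_self] at hW ⊢
  rw [submatrix_transpose_mul_self]
  set Bf := B.submatrix id f
  obtain ⟨hNWN, -, hNW, -⟩ := hW
  have hN : (Bfᵀ * Bf)ᵀ = Bfᵀ * Bf := by rw [transpose_mul, transpose_transpose]
  have hNP : Bfᵀ * Bf * (Bfᵀ * Bf * W) = Bfᵀ * Bf :=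
    calc Bfᵀ * Bf * (Bfᵀ * Bf * W) = (Bfᵀ * Bf * W * (Bfᵀ * Bf))ᵀ := by
          rw [transpose_mul, hN, hNW]
      _ = Bfᵀ * Bf := by rw [hNWN, hN]
  -- the orthogonal projector `M_{ff} W` fixes the columns of `Bfᵀ`, hence those of `M_{fg}`
  have hBP : Bf * (Bfᵀ * Bf * W) = Bf := mul_eq_self_of_transpose_mul_self_mul _ hNW hNP
  calc Bfᵀ * Bf * W * (Bfᵀ * B.submatrix id g)
      = (Bf * (Bfᵀ * Bf * W))ᵀ * B.submatrix id g := by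
        rw [transpose_mul, hNW]
        simp only [Matrix.mul_assoc]
    _ = Bfᵀ * B.submatrix id g := by rw [hBP]

theorem PosSemidef.isSymm {n : Type*} {M : Matrix n n ℝ} (hM : M.PosSemidef) : M.IsSymm :=
  isHermitian_iff_isSymm.mp hM.1

section Quadratic

variable {n : Type*} [Fintype n] {M : Matrix n n ℝ}

theorem IsSymm.dotProduct_mulVec_comm (hM : M.IsSymm) (u w : n → ℝ) :
    u ⬝ᵥ M *ᵥ w = w ⬝ᵥ M *ᵥ u := by
  rw [← dotProduct_transpose_mulVec, hM.eq]

theorem IsSymm.add_dotProduct_mulVec_add (hM : M.IsSymm) (u w : n → ℝ) :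
    (u + w) ⬝ᵥ M *ᵥ (u + w) = u ⬝ᵥ M *ᵥ u + 2 * (w ⬝ᵥ M *ᵥ u) + w ⬝ᵥ M *ᵥ w := by
  simp only [mulVec_add, add_dotProduct, dotProduct_add, hM.dotProduct_mulVec_comm u w]
  ring

theorem PosSemidef.dotProduct_mulVec_self_nonneg (hM : M.PosSemidef) (v : n → ℝ) :
    0 ≤ v ⬝ᵥ M *ᵥ v := by
  simpa using hM.dotProduct_mulVec_nonneg v

theorem PosSemidef.dotProduct_mulVec_le_add (hM : M.PosSemidef) {u w : n → ℝ}
    (h : w ⬝ᵥ M *ᵥ u = 0) : u ⬝ᵥ M *ᵥ u ≤ (u + w) ⬝ᵥ M *ᵥ (u + w) := by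
  rw [hM.isSymm.add_dotProduct_mulVec_add, h]
  linarith [hM.dotProduct_mulVec_self_nonneg w]

theorem PosSemidef.mulVec_apply_eq_zero [DecidableEq n] (hM : M.PosSemidef) {j : n}
    (hj : M j j = 0) (v : n → ℝ) : (M *ᵥ v) j = 0 := by
  have hcol : M *ᵥ Pi.single j 1 = 0 := by
    rw [← hM.dotProduct_mulVec_zero_iff, star_trivial, mulVec_single_one, single_one_dotProduct]
    exact hj
  rw [← single_one_dotProduct j (M *ᵥ v), hM.isSymm.dotProduct_mulVec_comm, hcol,
    dotProduct_zero]

end Quadratic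

end Matrix

section SmallestPositiveEigenvalue

variable {n : ℕ} {M : Matrix (Fin n) (Fin n) ℝ}

theorem lamMinPos_le (hM : M.PosSemidef) {μ : ℝ} (hμ : μ ≠ 0) {v : Fin n → ℝ} (hv : v ≠ 0)
    (h : M *ᵥ v = μ • v) : lamMinPos M ≤ μ := by
  refine csInf_le ⟨0, ?_⟩ ⟨hμ, v, hv, h⟩
  rintro ν ⟨-, u, hu, hνu⟩
  have hquad := hM.dotProduct_mulVec_self_nonneg u
  rw [hνu, dotProduct_smul, smul_eq_mul] at hquad
  have hpos : 0 < u ⬝ᵥ u :=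
    lt_of_le_of_ne (Finset.sum_nonneg fun i _ => mul_self_nonneg (u i))
      (Ne.symm (dotProduct_self_eq_zero.not.mpr hu))
  exact nonneg_of_mul_nonneg_left hquad hpos

theorem lamMinPos_le_eigenvalues (hM : M.PosSemidef) {i : Fin n}
    (hi : hM.1.eigenvalues i ≠ 0) : lamMinPos M ≤ hM.1.eigenvalues i := by
  refine lamMinPos_le hM hi (fun h => ?_) (hM.1.mulVec_eigenvectorBasis i)
  have hnorm := hM.1.eigenvectorBasis.orthonormal.1 i
  rw [show hM.1.eigenvectorBasis i = 0 from WithLp.ofLp_injective _ h, norm_zero] at hnorm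
  exact zero_ne_one hnorm

theorem lamMinPos_le_trace (hM : M.PosSemidef) (htr : 0 < M.trace) : lamMinPos M ≤ M.trace := by
  rw [hM.1.trace_eq_sum_eigenvalues] at htr ⊢
  obtain ⟨i, -, hi⟩ := Finset.exists_ne_zero_of_sum_ne_zero htr.ne'
  calc lamMinPos M ≤ hM.1.eigenvalues i := lamMinPos_le_eigenvalues hM (by exact_mod_cast hi)
    _ ≤ ∑ j, hM.1.eigenvalues j :=
      Finset.single_le_sum (fun j _ => hM.eigenvalues_nonneg j) (Finset.mem_univ i)
    _ = _ := by simp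

theorem one_sub_lamMinPos_div_trace_nonneg (hM : M.PosSemidef) (htr : 0 < M.trace) :
    0 ≤ 1 - lamMinPos M / M.trace :=
  sub_nonneg.mpr ((div_le_one htr).mpr (lamMinPos_le_trace hM htr))

theorem lamMinPos_mul_dotProduct_mulVec_le (hM : M.PosSemidef) (v : Fin n → ℝ) :
    lamMinPos M * (v ⬝ᵥ M *ᵥ v) ≤ (M *ᵥ v) ⬝ᵥ (M *ᵥ v) := by
  set d := hM.1.eigenvalues
  set U : Matrix (Fin n) (Fin n) ℝ := (hM.1.eigenvectorUnitary : Matrix (Fin n) (Fin n) ℝ)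
  have hUU : Uᵀ * U = 1 := by
    rw [← conjTranspose_eq_transpose_of_trivial, ← star_eq_conjTranspose]
    exact Unitary.coe_star_mul_self _
  have hMv : M *ᵥ v = U *ᵥ (diagonal d *ᵥ (Uᵀ *ᵥ v)) := by
    conv_lhs => rw [hM.1.spectral_theorem, Unitary.conjStarAlgAut_apply]
    simp [U, d, mulVec_mulVec, star_eq_conjTranspose, RCLike.ofReal_real_eq_id, Matrix.mul_assoc]
  set w := Uᵀ *ᵥ v
  have hquad : v ⬝ᵥ M *ᵥ v = w ⬝ᵥ diagonal d *ᵥ w := by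
    rw [hMv, ← dotProduct_transpose_mulVec, dotProduct_comm]
  have hsq : (M *ᵥ v) ⬝ᵥ (M *ᵥ v) = (diagonal d *ᵥ w) ⬝ᵥ (diagonal d *ᵥ w) := by
    rw [hMv, ← dotProduct_transpose_mulVec, mulVec_mulVec _ Uᵀ U, hUU, one_mulVec,
      dotProduct_comm]
  rw [hquad, hsq]
  simp only [dotProduct, mulVec_diagonal, Finset.mul_sum]
  refine Finset.sum_le_sum fun i _ => ?_
  rcases eq_or_ne (d i) 0 with hi | hi
  · simp [hi]
  · have := mul_le_mul_of_nonneg_right (lamMinPos_le_eigenvalues hM hi)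
      (mul_nonneg (hM.eigenvalues_nonneg i) (mul_self_nonneg (w i)))
    nlinarith

end SmallestPositiveEigenvalue

section Trajectories

variable {V I : Type*} (step : I → V → V)

theorem traj_snoc (x0 : V) (k : ℕ) (ω : Fin k → I) (i : I) :
    traj step x0 (k + 1) (Fin.snoc ω i) = step i (traj step x0 k ω) := by
  simp [traj]

theorem traj_mem {s : Set V} (hs : ∀ i, Set.MapsTo (step i) s s) {x0 : V} (hx0 : x0 ∈ s) :
    ∀ (k : ℕ) (ω : Fin k → I), traj step x0 k ω ∈ s
  | 0, _ => hx0
  | k + 1, ω => hs _ (traj_mem hs hx0 k (Fin.init ω))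

theorem sum_prod_mul_traj_le [Fintype I] {q : I → ℝ} (hq : ∀ i, 0 ≤ q i) {g : V → ℝ}
    {s : Set V} (hs : ∀ i, Set.MapsTo (step i) s s) {c : ℝ} (hc : 0 ≤ c)
    (hstep : ∀ v ∈ s, ∑ i, q i * g (step i v) ≤ c * g v) {x0 : V} (hx0 : x0 ∈ s) (k : ℕ) :
    ∑ ω : Fin k → I, (∏ j, q (ω j)) * g (traj step x0 k ω) ≤ c ^ k * g x0 := by
  induction k with
  | zero => simp [traj]
  | succ k ih =>
    have hsplit : ∀ ω : Fin k → I,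
        ∑ i, (∏ j, q (Fin.snoc ω i j)) * g (traj step x0 (k + 1) (Fin.snoc ω i)) =
          (∏ j, q (ω j)) * ∑ i, q i * g (step i (traj step x0 k ω)) := fun ω => by
      simp only [traj_snoc, Fin.prod_univ_castSucc, Fin.snoc_castSucc, Fin.snoc_last,
        Finset.mul_sum]
      exact Finset.sum_congr rfl fun i _ => by ring
    calc ∑ ω : Fin (k + 1) → I, (∏ j, q (ω j)) * g (traj step x0 (k + 1) ω)
        = ∑ ω : Fin k → I, (∏ j, q (ω j)) * ∑ i, q i * g (step i (traj step x0 k ω)) := by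
          rw [← (Fin.snocEquiv fun _ => I).sum_comp, Fintype.sum_prod_type, Finset.sum_comm]
          exact Finset.sum_congr rfl fun ω _ => hsplit ω
      _ ≤ ∑ ω : Fin k → I, (∏ j, q (ω j)) * (c * g (traj step x0 k ω)) := by
          gcongr with ω
          · exact Finset.prod_nonneg fun j _ => hq _
          · exact hstep _ (traj_mem step hs hx0 k ω)
      _ = c * ∑ ω : Fin k → I, (∏ j, q (ω j)) * g (traj step x0 k ω) := by
          rw [Finset.mul_sum]
          exact Finset.sum_congr rfl fun ω _ => by ring
      _ ≤ c ^ (k + 1) * g x0 := by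
          rw [pow_succ', mul_assoc]
          gcongr

end Trajectories

section CoordinateDescent

/-- Exact line search for the `M`-energy along coordinate `j`. When `M j j = 0` the step size is
the junk value `x / 0 = 0`, and the step is the identity. -/
noncomputable def coordStep {N : Type*} [Fintype N] [DecidableEq N] (M : Matrix N N ℝ) (j : N)
    (v : N → ℝ) : N → ℝ :=
  v - ((M *ᵥ v) j / M j j) • Pi.single j 1

theorem Matrix.PosSemidef.diag_mul_coordStep {N : Type*} [Fintype N] [DecidableEq N]
    {M : Matrix N N ℝ} (hM : M.PosSemidef) (j : N) (v : N → ℝ) :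
    M j j * (coordStep M j v ⬝ᵥ M *ᵥ coordStep M j v) =
      M j j * (v ⬝ᵥ M *ᵥ v) - (M *ᵥ v) j ^ 2 := by
  rcases eq_or_ne (M j j) 0 with hj | hj
  · simp [hj, hM.mulVec_apply_eq_zero hj]
  rw [coordStep, sub_eq_add_neg, hM.isSymm.add_dotProduct_mulVec_add]
  simp only [← neg_smul, mulVec_smul, smul_dotProduct, dotProduct_smul, single_one_dotProduct,
    mulVec_single_one, col_apply, smul_eq_mul]
  field_simp
  ring

theorem sum_diag_div_trace_mul_coordStep_le {n : ℕ} {M : Matrix (Fin n) (Fin n) ℝ}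
    (hM : M.PosSemidef) (htr : 0 < M.trace) (v : Fin n → ℝ) :
    ∑ j, M j j / M.trace * (coordStep M j v ⬝ᵥ M *ᵥ coordStep M j v) ≤
      (1 - lamMinPos M / M.trace) * (v ⬝ᵥ M *ᵥ v) :=
  calc ∑ j, M j j / M.trace * (coordStep M j v ⬝ᵥ M *ᵥ coordStep M j v)
      = (M.trace * (v ⬝ᵥ M *ᵥ v) - (M *ᵥ v) ⬝ᵥ (M *ᵥ v)) / M.trace := by
        simp only [div_mul_eq_mul_div, hM.diag_mul_coordStep, ← Finset.sum_div,
          Finset.sum_sub_distrib, ← Finset.sum_mul]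
        simp only [trace, diag_apply, dotProduct, sq]
    _ ≤ (M.trace * (v ⬝ᵥ M *ᵥ v) - lamMinPos M * (v ⬝ᵥ M *ᵥ v)) / M.trace := by
        gcongr
        exact lamMinPos_mul_dotProduct_mulVec_le hM v
    _ = (1 - lamMinPos M / M.trace) * (v ⬝ᵥ M *ᵥ v) := by
        field_simp

theorem traj_coordStep_eq_sub {N : Type*} [Fintype N] [DecidableEq N] (M : Matrix N N ℝ)
    (v : N → ℝ) : ∀ (m : ℕ) (K : Fin m → N), ∃ γ : Fin m → ℝ,
      traj (coordStep M) v m K = v - (1 : Matrix N N ℝ).submatrix id K *ᵥ γ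
  | 0, K => ⟨0, by simp [traj]⟩
  | m + 1, K => by
    obtain ⟨γ, hγ⟩ := traj_coordStep_eq_sub M v m (Fin.init K)
    rw [← Fin.snoc_init_self K, traj_snoc, hγ, coordStep]
    exact ⟨Fin.snoc γ _, by rw [submatrix_one_snoc_mulVec_snoc, sub_add_eq_sub_sub]⟩

theorem Matrix.PosSemidef.blockStep_le_traj_coordStep {N : Type*} [Fintype N] [DecidableEq N]
    {M : Matrix N N ℝ} (hM : M.PosSemidef) {l : ℕ} {J : Fin l → N}
    {Mp : Matrix (Fin l) (Fin l) ℝ} (hMp : IsMoorePenrose (M.submatrix J J) Mp) (e : N → ℝ) :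
    (e - (1 : Matrix N N ℝ).submatrix id J *ᵥ (Mp *ᵥ (M.submatrix J id *ᵥ e))) ⬝ᵥ
        M *ᵥ (e - (1 : Matrix N N ℝ).submatrix id J *ᵥ (Mp *ᵥ (M.submatrix J id *ᵥ e))) ≤
      traj (coordStep M) e l J ⬝ᵥ M *ᵥ traj (coordStep M) e l J := by
  set E := (1 : Matrix N N ℝ).submatrix id J
  set α := Mp *ᵥ (M.submatrix J id *ᵥ e) with hα
  have hEt : Eᵀ * M = M.submatrix J id := by
    rw [transpose_submatrix, transpose_one, submatrix_one_id_mul]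
  have hME : M.submatrix J id * E = M.submatrix J J := by
    rw [mul_submatrix_one_id, submatrix_submatrix, Function.comp_id, Function.id_comp]
  have hgalerkin : Eᵀ *ᵥ (M *ᵥ (e - E *ᵥ α)) = 0 := by
    simp only [hα, mulVec_sub, mulVec_mulVec, ← Matrix.mul_assoc, hEt, hME,
      hM.submatrix_mul_pinv_mul hMp id, sub_self]
  obtain ⟨γ, hγ⟩ := traj_coordStep_eq_sub M e l J
  rw [hγ, show e - E *ᵥ γ = (e - E *ᵥ α) + E *ᵥ (α - γ) by rw [mulVec_sub]; abel]
  refine hM.dotProduct_mulVec_le_add ?_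
  rw [dotProduct_comm, ← dotProduct_transpose_mulVec, hgalerkin, dotProduct_zero]

theorem sum_prod_mul_blockStep_le {n l : ℕ} {M : Matrix (Fin n) (Fin n) ℝ} (hM : M.PosSemidef)
    (htr : 0 < M.trace) {Mp : (Fin l → Fin n) → Matrix (Fin l) (Fin l) ℝ}
    (hMp : ∀ J, IsMoorePenrose (M.submatrix J J) (Mp J)) (e : Fin n → ℝ) :
    ∑ J : Fin l → Fin n, (∏ t, M (J t) (J t) / M.trace) *
        ((e - (1 : Matrix (Fin n) (Fin n) ℝ).submatrix id J *ᵥ (Mp J *ᵥ (M.submatrix J id *ᵥ e)))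
          ⬝ᵥ M *ᵥ
          (e - (1 : Matrix (Fin n) (Fin n) ℝ).submatrix id J *ᵥ (Mp J *ᵥ (M.submatrix J id *ᵥ e))))
      ≤ (1 - lamMinPos M / M.trace) ^ l * (e ⬝ᵥ M *ᵥ e) := by
  have hprob : ∀ j, 0 ≤ M j j / M.trace := fun j => div_nonneg hM.diag_nonneg htr.le
  refine le_trans (Finset.sum_le_sum fun J _ => mul_le_mul_of_nonneg_left
    (hM.blockStep_le_traj_coordStep (hMp J) e) (Finset.prod_nonneg fun t _ => hprob _)) ?_
  exact sum_prod_mul_traj_le (coordStep M) hprob (g := fun v => v ⬝ᵥ M *ᵥ v)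
    (fun _ => Set.mapsTo_univ _ _) (one_sub_lamMinPos_div_trace_nonneg hM htr)
    (fun v _ => sum_diag_div_trace_mul_coordStep_le hM htr v) (Set.mem_univ e) l

end CoordinateDescent

section Nystrom

variable {N s : Type*} [Fintype N] [DecidableEq N] [Fintype s]

/-- `P = I − e_S (A_{S,S})† A_{S,:}` (with `e_S` the coordinate embedding `1.submatrix id ι`). -/
def nystromProj (A : Matrix N N ℝ) (ι : s → N) (W : Matrix s s ℝ) : Matrix N N ℝ :=
  1 - (1 : Matrix N N ℝ).submatrix id ι * (W * A.submatrix ι id)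

variable {A Ao : Matrix N N ℝ} {ι : s → N} {W : Matrix s s ℝ}

theorem mul_nystromProj (hAo : Ao = A - A.submatrix id ι * W * A.submatrix ι id) :
    A * nystromProj A ι W = Ao := by
  rw [nystromProj, Matrix.mul_sub, Matrix.mul_one, ← Matrix.mul_assoc, mul_submatrix_one_id,
    ← Matrix.mul_assoc, hAo]

theorem nystromProj_mulVec_of_mulVec_eq_zero {e : N → ℝ} (he : A.submatrix ι id *ᵥ e = 0) :
    nystromProj A ι W *ᵥ e = e := by
  rw [nystromProj, sub_mulVec, one_mulVec, ← mulVec_mulVec, ← mulVec_mulVec, he, mulVec_zero,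
    mulVec_zero, sub_zero]

theorem submatrix_mul_nystromProj_eq_zero (hA : A.PosSemidef)
    (hW : IsMoorePenrose (A.submatrix ι ι) W) : A.submatrix ι id * nystromProj A ι W = 0 := by
  rw [nystromProj, Matrix.mul_sub, Matrix.mul_one, ← Matrix.mul_assoc, mul_submatrix_one_id,
    submatrix_submatrix, Function.comp_id, Function.id_comp, ← Matrix.mul_assoc,
    hA.submatrix_mul_pinv_mul hW, sub_self]

theorem transpose_nystromProj_mul_mul (hA : A.PosSemidef)
    (hW : IsMoorePenrose (A.submatrix ι ι) W)
    (hAo : Ao = A - A.submatrix id ι * W * A.submatrix ι id) :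
    (nystromProj A ι W)ᵀ * A * nystromProj A ι W = Ao := by
  have hPt : (nystromProj A ι W)ᵀ =
      1 - (W * A.submatrix ι id)ᵀ * (1 : Matrix N N ℝ).submatrix ι id := by
    rw [nystromProj, transpose_sub, transpose_one, transpose_mul, transpose_submatrix,
      transpose_one]
  rw [Matrix.mul_assoc, hPt, Matrix.sub_mul, Matrix.one_mul, Matrix.mul_assoc,
    ← Matrix.mul_assoc ((1 : Matrix N N ℝ).submatrix ι id) A, submatrix_one_id_mul,
    submatrix_mul_nystromProj_eq_zero hA hW, Matrix.mul_zero, sub_zero, mul_nystromProj hAo]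

theorem nystromResidual_posSemidef (hA : A.PosSemidef)
    (hW : IsMoorePenrose (A.submatrix ι ι) W)
    (hAo : Ao = A - A.submatrix id ι * W * A.submatrix ι id) : Ao.PosSemidef := by
  rw [← transpose_nystromProj_mul_mul hA hW hAo, ← conjTranspose_eq_transpose_of_trivial]
  exact hA.conjTranspose_mul_mul_same _

theorem nystromProj_mulVec_dotProduct (hA : A.PosSemidef)
    (hW : IsMoorePenrose (A.submatrix ι ι) W)
    (hAo : Ao = A - A.submatrix id ι * W * A.submatrix ι id) (u : N → ℝ) :
    nystromProj A ι W *ᵥ u ⬝ᵥ A *ᵥ (nystromProj A ι W *ᵥ u) = u ⬝ᵥ Ao *ᵥ u := by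
  rw [dotProduct_comm, ← dotProduct_transpose_mulVec, mulVec_mulVec, mulVec_mulVec,
    transpose_nystromProj_mul_mul hA hW hAo]

theorem scrcdStep_sub_eq {t : Type*} [Fintype t]
    (hAo : Ao = A - A.submatrix id ι * W * A.submatrix ι id)
    {b xstar x : N → ℝ} (hxstar : A *ᵥ xstar = b) (hx : A.submatrix ι id *ᵥ (x - xstar) = 0)
    (J : t → N) (Mp : Matrix t t ℝ) :
    x - (1 : Matrix N N ℝ).submatrix id J *ᵥ (Mp *ᵥ fun j => (A *ᵥ x - b) (J j)) +
        (1 : Matrix N N ℝ).submatrix id ι *ᵥ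
          ((W * A.submatrix ι id).submatrix id J *ᵥ (Mp *ᵥ fun j => (A *ᵥ x - b) (J j))) -
        xstar =
      nystromProj A ι W *ᵥ (x - xstar -
        (1 : Matrix N N ℝ).submatrix id J *ᵥ (Mp *ᵥ (Ao.submatrix J id *ᵥ (x - xstar)))) := by
  have hPe := nystromProj_mulVec_of_mulVec_eq_zero (W := W) hx
  have hres : A *ᵥ x - b = Ao *ᵥ (x - xstar) :=
    calc A *ᵥ x - b = A *ᵥ (nystromProj A ι W *ᵥ (x - xstar)) := by
          rw [hPe, mulVec_sub, hxstar]
      _ = Ao *ᵥ (x - xstar) := by rw [mulVec_mulVec, mul_nystromProj hAo]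
  rw [show (fun j => (A *ᵥ x - b) (J j)) = Ao.submatrix J id *ᵥ (x - xstar) by rw [hres]; rfl,
    ← mul_submatrix_one_id (W * A.submatrix ι id) J]
  set α := Mp *ᵥ (Ao.submatrix J id *ᵥ (x - xstar))
  rw [mulVec_sub, hPe, nystromProj, sub_mulVec, one_mulVec]
  simp only [mulVec_mulVec, Matrix.mul_assoc]
  abel

end Nystrom

theorem sum_prod_mul_nystromProj_blockStep_le {n l : ℕ} {s : Type*} [Fintype s]
    {ι : s → Fin n} {W : Matrix s s ℝ} {A Ao : Matrix (Fin n) (Fin n) ℝ} (hA : A.PosSemidef)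
    (hW : IsMoorePenrose (A.submatrix ι ι) W)
    (hAo : Ao = A - A.submatrix id ι * W * A.submatrix ι id) (htr : 0 < Ao.trace)
    {Mp : (Fin l → Fin n) → Matrix (Fin l) (Fin l) ℝ}
    (hMp : ∀ J, IsMoorePenrose (Ao.submatrix J J) (Mp J)) {e : Fin n → ℝ}
    (he : A.submatrix ι id *ᵥ e = 0) :
    ∑ J : Fin l → Fin n, (∏ t, Ao (J t) (J t) / Ao.trace) *
        (nystromProj A ι W *ᵥ (e - (1 : Matrix (Fin n) (Fin n) ℝ).submatrix id J *ᵥ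
            (Mp J *ᵥ (Ao.submatrix J id *ᵥ e))) ⬝ᵥ
          A *ᵥ (nystromProj A ι W *ᵥ (e - (1 : Matrix (Fin n) (Fin n) ℝ).submatrix id J *ᵥ
            (Mp J *ᵥ (Ao.submatrix J id *ᵥ e))))) ≤
      (1 - lamMinPos Ao / Ao.trace) ^ l * (e ⬝ᵥ A *ᵥ e) := by
  simp only [nystromProj_mulVec_dotProduct hA hW hAo]
  conv_rhs => rw [← nystromProj_mulVec_of_mulVec_eq_zero (W := W) he,
    nystromProj_mulVec_dotProduct hA hW hAo]
  exact sum_prod_mul_blockStep_le (nystromResidual_posSemidef hA hW hAo) htr hMp e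

theorem stmt_12_general {n l : ℕ}
    (A : Matrix (Fin n) (Fin n) ℝ) (hA : A.PosSemidef)
    (b : Fin n → ℝ)
    (xstar : Fin n → ℝ) (hxstar : A *ᵥ xstar = b)
    (S : Finset (Fin n))
    -- `W = (A_{S,S})†`
    (W : Matrix {j // j ∈ S} {j // j ∈ S} ℝ)
    (hW : IsMoorePenrose (A.submatrix (fun j : {j // j ∈ S} => (j : Fin n))
      (fun j : {j // j ∈ S} => (j : Fin n))) W)
    -- the Nyström residual `A° = A − A_{:,S}(A_{S,S})†A_{S,:}`
    (Ao : Matrix (Fin n) (Fin n) ℝ)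
    (hAo : Ao = A - A.submatrix id (fun j : {j // j ∈ S} => (j : Fin n)) * W *
      A.submatrix (fun j : {j // j ∈ S} => (j : Fin n)) id)
    (htr : 0 < Ao.trace)
    -- the auxiliary matrix `C = (A_{S,S})† A_{S,:}`
    (C : Matrix {j // j ∈ S} (Fin n) ℝ)
    (hC : C = W * A.submatrix (fun j : {j // j ∈ S} => (j : Fin n)) id)
    -- `pJ J = (A°_{J,J})†` for a block `J` of `ℓ` coordinates
    (pJ : (Fin l → Fin n) → Matrix (Fin l) (Fin l) ℝ)
    (hpJ : ∀ J : Fin l → Fin n, IsMoorePenrose (Ao.submatrix J J) (pJ J))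
    -- coordinate selection matrices `e_S` and `e_J`
    (eS : Matrix (Fin n) {j // j ∈ S} ℝ)
    (heS : eS = Matrix.of fun i j => if i = j.val then 1 else 0)
    (eJ : (Fin l → Fin n) → Matrix (Fin n) (Fin l) ℝ)
    (heJ : ∀ J, eJ J = Matrix.of fun i t => if i = J t then 1 else 0)
    -- the SC-RCD update: `x^{k+1} = x^k − e_J α + e_S β` with `α = (A°_{J,J})† r_J`,
    -- `β = C_{:,J} α`, and `r = A x^k − b`
    (step : (Fin l → Fin n) → (Fin n → ℝ) → (Fin n → ℝ))
    (hstep : ∀ (J : Fin l → Fin n) (x : Fin n → ℝ),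
      step J x = x - eJ J *ᵥ (pJ J *ᵥ fun t => (A *ᵥ x - b) (J t))
        + eS *ᵥ (C.submatrix id J *ᵥ (pJ J *ᵥ fun t => (A *ᵥ x - b) (J t))))
    -- `x0` solves the subsystem `A_{S,:} x = b_S`
    (x0 : Fin n → ℝ)
    (hx0 : A.submatrix (fun j : {j // j ∈ S} => (j : Fin n)) id *ᵥ x0 =
      fun j : {j // j ∈ S} => b j)
    -- the coordinate sampling probabilities `A°_{j,j}/tr(A°)`
    (p : Fin n → ℝ) (hp : ∀ j, p j = Ao j j / Ao.trace) :
    ∀ k : ℕ,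
      ∑ ω : Fin k → (Fin l → Fin n), (∏ i, ∏ t, p (ω i t)) *
          ((traj step x0 k ω - xstar) ⬝ᵥ (A *ᵥ (traj step x0 k ω - xstar))) ≤
        (1 - lamMinPos Ao / Ao.trace) ^ (k * l) *
          ((x0 - xstar) ⬝ᵥ (A *ᵥ (x0 - xstar))) := by
  intro k
  obtain rfl : p = fun j => Ao j j / Ao.trace := funext hp
  obtain rfl : eJ = fun J => (1 : Matrix (Fin n) (Fin n) ℝ).submatrix id J :=
    funext fun J => (heJ J).trans (of_ite_eq_submatrix_one J)
  rw [of_ite_eq_submatrix_one] at heS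
  subst heS hC
  set R := A.submatrix (fun j : {j // j ∈ S} => (j : Fin n)) id
  set inv : Set (Fin n → ℝ) := {x | R *ᵥ (x - xstar) = 0}
  have hAo_psd := nystromResidual_posSemidef hA hW hAo
  have herr : ∀ J, ∀ x ∈ inv, step J x - xstar =
      nystromProj A _ W *ᵥ (x - xstar - (1 : Matrix (Fin n) (Fin n) ℝ).submatrix id J *ᵥ
        (pJ J *ᵥ (Ao.submatrix J id *ᵥ (x - xstar)))) := fun J x hx => by
    rw [hstep]
    exact scrcdStep_sub_eq hAo hxstar hx J (pJ J)
  have hmaps : ∀ J, Set.MapsTo (step J) inv inv := fun J x hx => by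
    change R *ᵥ _ = 0
    rw [herr J x hx, mulVec_mulVec, submatrix_mul_nystromProj_eq_zero hA hW, zero_mulVec]
  have hx0_mem : x0 ∈ inv := by
    change R *ᵥ _ = 0
    rw [mulVec_sub, hx0, submatrix_id_mulVec, hxstar]
    exact sub_self _
  rw [mul_comm k l, pow_mul]
  refine sum_prod_mul_traj_le step (q := fun J => ∏ t, Ao (J t) (J t) / Ao.trace)
    (g := fun x => (x - xstar) ⬝ᵥ A *ᵥ (x - xstar))
    (fun J => Finset.prod_nonneg fun t _ => div_nonneg hAo_psd.diag_nonneg htr.le) hmaps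
    (pow_nonneg (one_sub_lamMinPos_div_trace_nonneg hAo_psd htr) l) (fun x hx => ?_) hx0_mem k
  simp only [herr _ x hx]
  exact sum_prod_mul_nystromProj_blockStep_le hA hW hAo htr hpJ hx

/-- SC-RCD convergence, diagonal sampling. For psd `A`, pivot set
`S`, Nyström residual `A° = A − A_{:,S}(A_{S,S})†A_{S,:}` with `tr(A°) > 0`, and
blocks of `ℓ` coordinates sampled i.i.d. with probabilities `A°_{j,j}/tr(A°)`, the
SC-RCD iterates satisfy
`E‖x^k − x*‖_A² ≤ (1 − λmin⁺(A°)/tr(A°))^{kℓ} ‖x^0 − x*‖_A²`. -/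
theorem stmt_12 {n l : ℕ}
    (A : Matrix (Fin n) (Fin n) ℝ) (hA : A.PosSemidef)
    (b : Fin n → ℝ) (hconsistent : ∃ x, A *ᵥ x = b)
    (xstar : Fin n → ℝ) (hxstar : A *ᵥ xstar = b)
    (S : Finset (Fin n))
    -- `W = (A_{S,S})†`
    (W : Matrix {j // j ∈ S} {j // j ∈ S} ℝ)
    (hW : IsMoorePenrose (A.submatrix (fun j : {j // j ∈ S} => (j : Fin n))
      (fun j : {j // j ∈ S} => (j : Fin n))) W)
    -- the Nyström residual `A° = A − A_{:,S}(A_{S,S})†A_{S,:}`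
    (Ao : Matrix (Fin n) (Fin n) ℝ)
    (hAo : Ao = A - A.submatrix id (fun j : {j // j ∈ S} => (j : Fin n)) * W *
      A.submatrix (fun j : {j // j ∈ S} => (j : Fin n)) id)
    (htr : 0 < Ao.trace)
    -- the auxiliary matrix `C = (A_{S,S})† A_{S,:}`
    (C : Matrix {j // j ∈ S} (Fin n) ℝ)
    (hC : C = W * A.submatrix (fun j : {j // j ∈ S} => (j : Fin n)) id)
    -- `pJ J = (A°_{J,J})†` for a block `J` of `ℓ` coordinates
    (pJ : (Fin l → Fin n) → Matrix (Fin l) (Fin l) ℝ)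
    (hpJ : ∀ J : Fin l → Fin n, IsMoorePenrose (Ao.submatrix J J) (pJ J))
    -- coordinate selection matrices `e_S` and `e_J`
    (eS : Matrix (Fin n) {j // j ∈ S} ℝ)
    (heS : eS = Matrix.of fun i j => if i = j.val then 1 else 0)
    (eJ : (Fin l → Fin n) → Matrix (Fin n) (Fin l) ℝ)
    (heJ : ∀ J, eJ J = Matrix.of fun i t => if i = J t then 1 else 0)
    -- the SC-RCD update: `x^{k+1} = x^k − e_J α + e_S β` with `α = (A°_{J,J})† r_J`,
    -- `β = C_{:,J} α`, and `r = A x^k − b`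
    (step : (Fin l → Fin n) → (Fin n → ℝ) → (Fin n → ℝ))
    (hstep : ∀ (J : Fin l → Fin n) (x : Fin n → ℝ),
      step J x = x - eJ J *ᵥ (pJ J *ᵥ fun t => (A *ᵥ x - b) (J t))
        + eS *ᵥ (C.submatrix id J *ᵥ (pJ J *ᵥ fun t => (A *ᵥ x - b) (J t))))
    -- `x0` solves the subsystem `A_{S,:} x = b_S`
    (x0 : Fin n → ℝ)
    (hx0 : A.submatrix (fun j : {j // j ∈ S} => (j : Fin n)) id *ᵥ x0 =
      fun j : {j // j ∈ S} => b j)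
    -- the coordinate sampling probabilities `A°_{j,j}/tr(A°)`
    (p : Fin n → ℝ) (hp : ∀ j, p j = Ao j j / Ao.trace) :
    ∀ k : ℕ,
      ∑ ω : Fin k → (Fin l → Fin n), (∏ i, ∏ t, p (ω i t)) *
          ((traj step x0 k ω - xstar) ⬝ᵥ (A *ᵥ (traj step x0 k ω - xstar))) ≤
        (1 - lamMinPos Ao / Ao.trace) ^ (k * l) *
          ((x0 - xstar) ⬝ᵥ (A *ᵥ (x0 - xstar))) :=
  stmt_12_general A hA b xstar hxstar S W hW Ao hAo htr C hC pJ hpJ eS heS eJ heJ step hstep x0 hx0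
    p hp
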